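/- arXiv:2507.23553 — 3 statements merged into one kernel-verified Lean document; each statement's English description precedes it below -/
import Mathlib

section
/- Let b̃ : ℝ^d × ℝ^d → ℝ^d be bounded and Lipschitz continuous (jointly in both variables). Let (Ω, 𝒜, ℙ) be a probability space and let W : Ω → Ω_T and ξ : Ω → ℝ^d be measurable (for instance W a Brownian motion with continuous paths). Then there exists a measurable map X : Ω → Ω_T such that, denoting by μ^X ∈ 𝒫(Ω_T) the law of X and by μ^X_s its time-s marginal, ℙ-almost surely for all t ∈ [0,T]: X_t = ξ + W_t + ∫₀ᵗ ( ∫_{ℝ^d} b̃(X_s, y) μ^X_s(dy) ) ds. Moreover the solution is unique: if X' : Ω → Ω_T is another measurable map satisfying the same equation with its own law μ^{X'}, then law(X') = law(X) and X' = X ℙ-almost surely. -/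
open MeasureTheory Set

noncomputable section

/-- Euclidean space `ℝ^d`. -/
abbrev Euc (d : ℕ) := EuclideanSpace ℝ (Fin d)

/-- The canonical path space `Ω_T = C([0,T]; ℝ^d)`. -/
abbrev PathSpace (d : ℕ) (T : ℝ) := C(Set.Icc (0:ℝ) T, Euc d)

instance (d : ℕ) (T : ℝ) : MeasurableSpace (PathSpace d T) := borel _
instance (d : ℕ) (T : ℝ) : BorelSpace (PathSpace d T) := ⟨rfl⟩

/-- Evaluation of a path at time `s ∈ [0,T]` (times outside `[0,T]` are clamped). -/
def evalAt {d : ℕ} {T : ℝ} (hT : 0 ≤ T) (s : ℝ) (ω : PathSpace d T) : Euc d :=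
  ω (Set.projIcc 0 T hT s)

/-- The truncated sup-distance `sup_{s ≤ t} |ω₁(s) − ω₂(s)|` of a pair of paths. -/
def pathDistSup {d : ℕ} {T : ℝ} (t : ℝ) (p : PathSpace d T × PathSpace d T) : ℝ :=
  ⨆ s : Set.Icc (0:ℝ) T, if (s : ℝ) ≤ t then dist (p.1 s) (p.2 s) else 0

/-- The truncated Wasserstein distance
`𝒲_t(μ,ν) = inf_π ∫ (sup_{s ≤ t} |ω₁(s) − ω₂(s)|) ∧ 1 dπ` over couplings `π` of `μ, ν`. -/
def truncWass (d : ℕ) (T : ℝ) (t : ℝ) (μ ν : Measure (PathSpace d T)) : ℝ :=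
  sInf { r : ℝ | ∃ π : Measure (PathSpace d T × PathSpace d T), IsProbabilityMeasure π ∧
    π.map Prod.fst = μ ∧ π.map Prod.snd = ν ∧
    r = ∫ p, min (pathDistSup t p) 1 ∂π }

/-- `X` solves, `ℙ`-a.s. and for all `t ∈ [0,T]`, the equation
`X_t = ξ + W_t + ∫₀ᵗ ( ∫ b̃(X_s, y) μ_s(dy) ) ds`, where `μ_s` is the time-`s` marginal of
the input measure `μ` on path space. -/
def SolvesSznitmanEq {d : ℕ} {T : ℝ} (hT : 0 ≤ T) (btilde : Euc d × Euc d → Euc d)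
    {Ω : Type} [MeasurableSpace Ω] (ℙ : Measure Ω) (ξ : Ω → Euc d) (W : Ω → PathSpace d T)
    (μ : Measure (PathSpace d T)) (X : Ω → PathSpace d T) : Prop :=
  ∀ᵐ ω ∂ℙ, ∀ t ∈ Set.Icc (0:ℝ) T,
    evalAt hT t (X ω) = ξ ω + evalAt hT t (W ω)
      + ∫ s in Set.Icc (0:ℝ) t, ∫ y, btilde (evalAt hT s (X ω), y) ∂(μ.map (evalAt hT s))

/-! Solutions are the almost sure fixed points of the Picard map
`(Φ X)_t(ω) = ξ(ω) + W_t(ω) + ∫₀ᵗ ∫ b̃(X_s(ω), X_s(ω')) dℙ(ω') ds` on measurable random paths.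
As `b̃` is `L`-Lipschitz in both arguments, a gap `g(s)` between `X` and `Y` at time `s`, holding
almost surely, becomes a gap `∫₀ᵗ 2L g(s) ds` between `Φ X` and `Φ Y` along every such sample.
Any two images of `Φ` are within `2KT`, so iterating gives the gaps `2KT (2Lt)ⁿ / n!`. Their
summability makes the Picard iterates converge uniformly in `ω` to a measurable fixed point, and
applied to two fixed points they force almost sure equality, hence equality of the laws. -/

namespace McKeanVlasov

open Filter Topology
open scoped NNReal

lemma exists_tendsto_of_dist_succ_le {ι α : Type*} [PseudoMetricSpace α] [CompleteSpace α]
    {f : ℕ → ι → α} {a : ℕ → ℝ} (ha : Summable a) (hf : ∀ n i, dist (f n i) (f (n + 1) i) ≤ a n) :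
    ∃ g : ι → α, (∀ i, Tendsto (fun n => f n i) atTop (𝓝 (g i))) ∧
      ∀ n i, dist (f n i) (g i) ≤ ∑' m, a (n + m) := by
  choose g hg using fun i =>
    cauchySeq_tendsto_of_complete (cauchySeq_of_dist_le_of_summable a (hf · i) ha)
  exact ⟨g, hg, fun n i => dist_le_tsum_of_dist_le_of_tendsto a (hf · i) ha (hg i) n⟩

section PicardBound

def picardBound (C c : ℝ) (n : ℕ) (t : ℝ) : ℝ := C * (c * t) ^ n / n.factorial

@[simp]
lemma picardBound_zero (C c t : ℝ) : picardBound C c 0 t = C := by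
  simp [picardBound]

lemma continuous_picardBound (C c : ℝ) (n : ℕ) : Continuous (picardBound C c n) := by
  unfold picardBound; fun_prop

lemma integral_mul_picardBound (C c t : ℝ) (n : ℕ) :
    ∫ s in (0:ℝ)..t, c * picardBound C c n s = picardBound C c (n + 1) t := by
  have hn : (n.factorial : ℝ) ≠ 0 := Nat.cast_ne_zero.mpr n.factorial_ne_zero
  simp only [picardBound, mul_pow, intervalIntegral.integral_const_mul,
    intervalIntegral.integral_div, integral_pow, Nat.factorial_succ]
  push_cast
  field_simp
  ring

variable {C c : ℝ}

lemma picardBound_nonneg (hC : 0 ≤ C) (hc : 0 ≤ c) (n : ℕ) {t : ℝ} (ht : 0 ≤ t) :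
    0 ≤ picardBound C c n t := by
  unfold picardBound; positivity

lemma picardBound_mono (hC : 0 ≤ C) (hc : 0 ≤ c) (n : ℕ) {t T : ℝ} (ht : 0 ≤ t) (htT : t ≤ T) :
    picardBound C c n t ≤ picardBound C c n T := by
  unfold picardBound; gcongr

lemma summable_picardBound (C c T : ℝ) : Summable fun n => picardBound C c n T := by
  simpa only [picardBound, mul_div_assoc] using (Real.summable_pow_div_factorial (c * T)).mul_left C

end PicardBound

section Paths

variable {d : ℕ} {T : ℝ}

lemma evalAt_of_mem (hT : 0 ≤ T) {t : ℝ} (ht : t ∈ Icc 0 T) (x : PathSpace d T) :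
    evalAt hT t x = x ⟨t, ht⟩ := by
  rw [evalAt, projIcc_of_mem hT ht]

lemma continuous_evalAt_time (hT : 0 ≤ T) (x : PathSpace d T) :
    Continuous fun s => evalAt hT s x :=
  x.continuous.comp continuous_projIcc

lemma measurable_evalAt (hT : 0 ≤ T) (s : ℝ) : Measurable (evalAt (d := d) hT s) :=
  (continuous_eval_const _).measurable

lemma dist_le_picardBound_of_forall (hT : 0 ≤ T) {C c : ℝ} {n : ℕ} (hC : 0 ≤ C) (hc : 0 ≤ c)
    {x y : PathSpace d T} (h : ∀ s : Icc 0 T, dist (x s) (y s) ≤ picardBound C c n s) :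
    dist x y ≤ picardBound C c n T :=
  (ContinuousMap.dist_le (picardBound_nonneg hC hc n hT)).2 fun s =>
    (h s).trans (picardBound_mono hC hc n s.2.1 s.2.2)

open Classical in
/-- Junk value `0` when `f` is not continuous. -/
def pathOf (f : Icc 0 T → Euc d) : PathSpace d T := if h : Continuous f then ⟨f, h⟩ else 0

lemma pathOf_apply {f : Icc 0 T → Euc d} (hf : Continuous f) (t : Icc 0 T) : pathOf f t = f t := by
  rw [pathOf, dif_pos hf]
  rfl

end Paths

section Drift

variable {d : ℕ} {T : ℝ} (hT : 0 ≤ T) (b : Euc d × Euc d → Euc d)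
  {Ω : Type} [MeasurableSpace Ω] (ℙ : Measure Ω)

/-- The drift `∫ b(x_s, y) μ_s(dy)` along the path `x`, for `μ` the law of `X`, written as an
integral over `Ω`. -/
def driftAlong (X : Ω → PathSpace d T) (x : PathSpace d T) (s : ℝ) : Euc d :=
  ∫ ω', b (evalAt hT s x, evalAt hT s (X ω')) ∂ℙ

def driftPath (X : Ω → PathSpace d T) (x : PathSpace d T) : PathSpace d T :=
  pathOf fun t => ∫ s in (0:ℝ)..t, driftAlong hT b ℙ X x s

def picardMap (ξ : Ω → Euc d) (W : Ω → PathSpace d T) (X : Ω → PathSpace d T) (ω : Ω) :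
    PathSpace d T :=
  ContinuousMap.const _ (ξ ω) + W ω + driftPath hT b ℙ X (X ω)

lemma dist_picardMap_apply (ξ : Ω → Euc d) (W : Ω → PathSpace d T) (X Y : Ω → PathSpace d T)
    (ω : Ω) (t : Icc 0 T) :
    dist (picardMap hT b ℙ ξ W X ω t) (picardMap hT b ℙ ξ W Y ω t)
      = dist (driftPath hT b ℙ X (X ω) t) (driftPath hT b ℙ Y (Y ω) t) := by
  simp only [picardMap, ContinuousMap.add_apply, dist_add_left]

variable {b ℙ} {X Y : Ω → PathSpace d T} {K : ℝ}

lemma integrable_drift_integrand [IsFiniteMeasure ℙ] (hb : Continuous b)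
    (hbK : ∀ p, ‖b p‖ ≤ K) (hX : Measurable X) (x : PathSpace d T) (s : ℝ) :
    Integrable (fun ω' => b (evalAt hT s x, evalAt hT s (X ω'))) ℙ :=
  .of_bound (((hb.comp (.prodMk_right _)).measurable.comp
    ((measurable_evalAt hT s).comp hX)).aestronglyMeasurable) K (.of_forall fun _ => hbK _)

lemma driftAlong_eq_integral_map (hb : Continuous b) (hX : Measurable X) (x : PathSpace d T)
    (s : ℝ) :
    driftAlong hT b ℙ X x s = ∫ y, b (evalAt hT s x, y) ∂((ℙ.map X).map (evalAt hT s)) := by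
  have hbx : Continuous fun y => b (evalAt hT s x, y) := hb.comp (.prodMk_right _)
  rw [Measure.map_map (measurable_evalAt hT s) hX,
    integral_map ((measurable_evalAt hT s).comp hX).aemeasurable hbx.aestronglyMeasurable]
  rfl

variable [IsProbabilityMeasure ℙ]

lemma norm_driftAlong_le (hbK : ∀ p, ‖b p‖ ≤ K) (x : PathSpace d T) (s : ℝ) :
    ‖driftAlong hT b ℙ X x s‖ ≤ K := by
  simpa [driftAlong] using norm_integral_le_of_norm_le_const (μ := ℙ) (.of_forall fun ω' => hbK
    (evalAt hT s x, evalAt hT s (X ω')))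

lemma norm_driftAlong_sub_le {Λ : ℝ≥0} (hb : LipschitzWith Λ b) (hbK : ∀ p, ‖b p‖ ≤ K)
    (hX : Measurable X) (hY : Measurable Y) (x y : PathSpace d T) (s : ℝ) {ρ : ℝ}
    (hρ : ∀ᵐ ω' ∂ℙ, dist (evalAt hT s (X ω')) (evalAt hT s (Y ω')) ≤ ρ) :
    ‖driftAlong hT b ℙ X x s - driftAlong hT b ℙ Y y s‖
      ≤ Λ * (dist (evalAt hT s x) (evalAt hT s y) + ρ) := by
  rw [driftAlong, driftAlong,
    ← integral_sub (integrable_drift_integrand hT hb.continuous hbK hX x s)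
      (integrable_drift_integrand hT hb.continuous hbK hY y s)]
  have hpointwise : ∀ᵐ ω' ∂ℙ,
      ‖b (evalAt hT s x, evalAt hT s (X ω')) - b (evalAt hT s y, evalAt hT s (Y ω'))‖
        ≤ Λ * (dist (evalAt hT s x) (evalAt hT s y) + ρ) := by
    filter_upwards [hρ] with ω' hω'
    rw [← dist_eq_norm]
    refine (hb.dist_le_mul _ _).trans (mul_le_mul_of_nonneg_left ?_ Λ.coe_nonneg)
    rw [Prod.dist_eq]
    exact max_le (le_add_of_nonneg_right (dist_nonneg.trans hω'))
      (hω'.trans (le_add_of_nonneg_left dist_nonneg))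
  simpa using norm_integral_le_of_norm_le_const hpointwise

lemma continuous_driftAlong (hb : Continuous b) (hbK : ∀ p, ‖b p‖ ≤ K) (hX : Measurable X)
    (x : PathSpace d T) : Continuous (driftAlong hT b ℙ X x) :=
  continuous_of_dominated (fun s => (integrable_drift_integrand hT hb hbK hX x s).1)
    (fun _ => .of_forall fun _ => hbK _) (integrable_const K)
    (.of_forall fun ω' => hb.comp ((continuous_evalAt_time hT x).prodMk
      (continuous_evalAt_time hT (X ω'))))

lemma driftPath_apply (hb : Continuous b) (hbK : ∀ p, ‖b p‖ ≤ K) (hX : Measurable X)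
    (x : PathSpace d T) (t : Icc 0 T) :
    driftPath hT b ℙ X x t = ∫ s in (0:ℝ)..t, driftAlong hT b ℙ X x s :=
  pathOf_apply ((intervalIntegral.continuous_primitive (fun _ _ =>
    (continuous_driftAlong hT hb hbK hX x).intervalIntegrable _ _) 0).comp continuous_subtype_val) t

end Drift

section Estimates

variable {d : ℕ} {T : ℝ} (hT : 0 ≤ T) {b : Euc d × Euc d → Euc d}
  {Ω : Type} [MeasurableSpace Ω] {ℙ : Measure Ω} [IsProbabilityMeasure ℙ]
  {X Y : Ω → PathSpace d T} {K : ℝ} (hbK : ∀ p, ‖b p‖ ≤ K)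
include hbK

lemma norm_driftPath_apply_le (hb : Continuous b) (hX : Measurable X) (x : PathSpace d T)
    (t : Icc 0 T) : ‖driftPath hT b ℙ X x t‖ ≤ K * t := by
  rw [driftPath_apply hT hb hbK hX]
  simpa [abs_of_nonneg t.2.1] using intervalIntegral.norm_integral_le_of_norm_le_const
    (a := 0) (b := t) fun s _ => norm_driftAlong_le hT (ℙ := ℙ) (X := X) hbK x s

lemma dist_driftPath_apply_le (hb : Continuous b) (hX : Measurable X) (hY : Measurable Y)
    (x y : PathSpace d T) (t : Icc 0 T) {g : ℝ → ℝ} (hg : IntervalIntegrable g volume 0 t)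
    (hxy : ∀ s ∈ Icc 0 (t : ℝ), ‖driftAlong hT b ℙ X x s - driftAlong hT b ℙ Y y s‖ ≤ g s) :
    dist (driftPath hT b ℙ X x t) (driftPath hT b ℙ Y y t) ≤ ∫ s in (0:ℝ)..t, g s := by
  rw [driftPath_apply hT hb hbK hX, driftPath_apply hT hb hbK hY, dist_eq_norm,
    ← intervalIntegral.integral_sub ((continuous_driftAlong hT hb hbK hX x).intervalIntegrable _ _)
      ((continuous_driftAlong hT hb hbK hY y).intervalIntegrable _ _)]
  exact intervalIntegral.norm_integral_le_of_norm_le t.2.1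
    (.of_forall fun s hs => hxy s (Ioc_subset_Icc_self hs)) hg

lemma lipschitzWith_driftPath {Λ : ℝ≥0} (hb : LipschitzWith Λ b) (hX : Measurable X) :
    LipschitzWith (Λ * T.toNNReal) (driftPath hT b ℙ X) := by
  refine .of_dist_le_mul fun x y => (ContinuousMap.dist_le (by positivity)).2 fun t => ?_
  have hdrift (s : ℝ) : ‖driftAlong hT b ℙ X x s - driftAlong hT b ℙ X y s‖ ≤ Λ * dist x y := by
    refine (norm_driftAlong_sub_le hT hb hbK hX hX x y s (ρ := 0)
      (.of_forall fun _ => by simp)).trans ?_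
    rw [add_zero]
    exact mul_le_mul_of_nonneg_left (ContinuousMap.dist_apply_le_dist _) Λ.coe_nonneg
  calc dist (driftPath hT b ℙ X x t) (driftPath hT b ℙ X y t)
      ≤ ∫ _ in (0:ℝ)..t, (Λ : ℝ) * dist x y :=
        dist_driftPath_apply_le hT hbK hb.continuous hX hX x y t intervalIntegrable_const
          fun s _ => hdrift s
    _ ≤ Λ * T.toNNReal * dist x y := by
        rw [intervalIntegral.integral_const, smul_eq_mul, sub_zero, Real.coe_toNNReal _ hT]
        linarith [mul_le_mul_of_nonneg_right t.2.2
          (mul_nonneg Λ.coe_nonneg (dist_nonneg (x := x) (y := y)))]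

lemma measurable_picardMap {Λ : ℝ≥0} (hb : LipschitzWith Λ b) {ξ : Ω → Euc d}
    {W : Ω → PathSpace d T} (hξ : Measurable ξ) (hW : Measurable W) (hX : Measurable X) :
    Measurable (picardMap hT b ℙ ξ W X) :=
  ((ContinuousMap.continuous_const'.measurable.comp hξ).add hW).add
    ((lipschitzWith_driftPath hT hbK hb hX).continuous.measurable.comp hX)

lemma dist_picardMap_le (hb : Continuous b) (hX : Measurable X) (hY : Measurable Y)
    (ξ : Ω → Euc d) (W : Ω → PathSpace d T) (ω : Ω) :
    dist (picardMap hT b ℙ ξ W X ω) (picardMap hT b ℙ ξ W Y ω) ≤ 2 * K * T := by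
  have hK : 0 ≤ K := (norm_nonneg _).trans (hbK 0)
  refine (ContinuousMap.dist_le (by positivity)).2 fun t => ?_
  rw [dist_picardMap_apply]
  calc _ ≤ K * t + K * t := (dist_le_norm_add_norm _ _).trans (add_le_add
          (norm_driftPath_apply_le hT hbK hb hX _ t) (norm_driftPath_apply_le hT hbK hb hY _ t))
    _ ≤ 2 * K * T := by nlinarith [t.2.2]

/-- The factor `2` collects the Lipschitz constant of `b` once for the gap between the two
samples and once for the gap between the two laws. -/
lemma dist_picardMap_apply_le_picardBound {Λ : ℝ≥0} (hb : LipschitzWith Λ b)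
    (hX : Measurable X) (hY : Measurable Y) (ξ : Ω → Euc d) (W : Ω → PathSpace d T)
    {C : ℝ} {n : ℕ} {ω : Ω}
    (hXY : ∀ᵐ ω' ∂ℙ, ∀ s : Icc 0 T, dist (X ω' s) (Y ω' s) ≤ picardBound C (2 * Λ) n s)
    (hω : ∀ s : Icc 0 T, dist (X ω s) (Y ω s) ≤ picardBound C (2 * Λ) n s) (t : Icc 0 T) :
    dist (picardMap hT b ℙ ξ W X ω t) (picardMap hT b ℙ ξ W Y ω t)
      ≤ picardBound C (2 * Λ) (n + 1) t := by
  rw [dist_picardMap_apply, ← integral_mul_picardBound]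
  refine dist_driftPath_apply_le hT hbK hb.continuous hX hY _ _ t
    ((continuous_const.mul (continuous_picardBound _ _ _)).intervalIntegrable _ _) fun s hs => ?_
  have hsT : s ∈ Icc 0 T := ⟨hs.1, hs.2.trans t.2.2⟩
  have hρ : ∀ᵐ ω' ∂ℙ,
      dist (evalAt hT s (X ω')) (evalAt hT s (Y ω')) ≤ picardBound C (2 * Λ) n s := by
    filter_upwards [hXY] with ω' h
    simpa only [evalAt_of_mem hT hsT] using h ⟨s, hsT⟩
  have h := norm_driftAlong_sub_le hT hb hbK hX hY (X ω) (Y ω) s hρ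
  rw [evalAt_of_mem hT hsT, evalAt_of_mem hT hsT] at h
  calc _ ≤ Λ * (picardBound C (2 * Λ) n s + picardBound C (2 * Λ) n s) := by
        refine h.trans (mul_le_mul_of_nonneg_left ?_ Λ.coe_nonneg)
        gcongr
        exact hω ⟨s, hsT⟩
    _ = 2 * Λ * picardBound C (2 * Λ) n s := by ring

end Estimates

section FixedPoints

variable {d : ℕ} {T : ℝ} (hT : 0 ≤ T) {b : Euc d × Euc d → Euc d}
  {Ω : Type} [MeasurableSpace Ω] {ℙ : Measure Ω} [IsProbabilityMeasure ℙ]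
  {X Y : Ω → PathSpace d T} {K : ℝ} (hbK : ∀ p, ‖b p‖ ≤ K)
include hbK

lemma solvesSznitmanEq_map_iff (hb : Continuous b) (hX : Measurable X) (ξ : Ω → Euc d)
    (W : Ω → PathSpace d T) :
    SolvesSznitmanEq hT b ℙ ξ W (ℙ.map X) X ↔ ∀ᵐ ω ∂ℙ, picardMap hT b ℙ ξ W X ω = X ω := by
  refine eventually_congr (.of_forall fun ω => ?_)
  rw [ContinuousMap.ext_iff, Subtype.forall]
  refine forall₂_congr fun t ht => ?_
  simp only [evalAt_of_mem hT ht, picardMap, ContinuousMap.add_apply, ContinuousMap.const_apply,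
    driftPath_apply hT hb hbK hX, ← driftAlong_eq_integral_map hT hb hX,
    integral_Icc_eq_integral_Ioc, ← intervalIntegral.integral_of_le ht.1, eq_comm]

theorem ae_eq_of_picardMap_ae_eq {Λ : ℝ≥0} (hb : LipschitzWith Λ b) (hX : Measurable X)
    (hY : Measurable Y) (ξ : Ω → Euc d) (W : Ω → PathSpace d T)
    (hXfix : ∀ᵐ ω ∂ℙ, picardMap hT b ℙ ξ W X ω = X ω)
    (hYfix : ∀ᵐ ω ∂ℙ, picardMap hT b ℙ ξ W Y ω = Y ω) : X =ᵐ[ℙ] Y := by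
  have hK : 0 ≤ K := (norm_nonneg _).trans (hbK 0)
  have hgap (n : ℕ) : ∀ᵐ ω ∂ℙ, ∀ s : Icc 0 T,
      dist (X ω s) (Y ω s) ≤ picardBound (2 * K * T) (2 * Λ) n s := by
    induction n with
    | zero =>
      filter_upwards [hXfix, hYfix] with ω hXω hYω s
      rw [picardBound_zero, ← hXω, ← hYω]
      exact (ContinuousMap.dist_apply_le_dist s).trans
        (dist_picardMap_le hT hbK hb.continuous hX hY ξ W ω)
    | succ n ih =>
      filter_upwards [hXfix, hYfix, ih] with ω hXω hYω hω s
      rw [← hXω, ← hYω]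
      exact dist_picardMap_apply_le_picardBound hT hbK hb hX hY ξ W ih hω s
  filter_upwards [ae_all_iff.2 hgap] with ω hω
  refine ContinuousMap.ext fun s => dist_le_zero.1 <|
    ge_of_tendsto' (summable_picardBound _ _ _).tendsto_atTop_zero fun n =>
      (hω n s).trans (picardBound_mono (by positivity) (by positivity) n s.2.1 s.2.2)

lemma tendsto_picardMap_apply {Λ : ℝ≥0} (hb : LipschitzWith Λ b) {Xs : ℕ → Ω → PathSpace d T}
    (hXs : ∀ n, Measurable (Xs n)) (hX : Measurable X) (ξ : Ω → Euc d) (W : Ω → PathSpace d T)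
    {r : ℕ → ℝ} (hr : ∀ n ω, dist (Xs n ω) (X ω) ≤ r n) (hr0 : Tendsto r atTop (𝓝 0)) (ω : Ω) :
    Tendsto (fun n => picardMap hT b ℙ ξ W (Xs n) ω) atTop (𝓝 (picardMap hT b ℙ ξ W X ω)) := by
  have hr_nonneg (n : ℕ) : 0 ≤ r n := dist_nonneg.trans (hr n ω)
  have hgap (n : ℕ) (ω' : Ω) (s : Icc 0 T) :
      dist (Xs n ω' s) (X ω' s) ≤ picardBound (r n) (2 * Λ) 0 s := by
    rw [picardBound_zero]
    exact (ContinuousMap.dist_apply_le_dist s).trans (hr n ω')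
  refine tendsto_iff_dist_tendsto_zero.2 (squeeze_zero (fun _ => dist_nonneg) (fun n =>
    dist_le_picardBound_of_forall hT (hr_nonneg n) (by positivity)
      (dist_picardMap_apply_le_picardBound hT hbK hb (hXs n) hX ξ W
        (.of_forall (hgap n)) (hgap n ω))) ?_)
  simpa [picardBound] using hr0.mul_const (2 * Λ * T)

theorem exists_measurable_picardMap_eq {Λ : ℝ≥0} (hb : LipschitzWith Λ b) {ξ : Ω → Euc d}
    {W : Ω → PathSpace d T} (hξ : Measurable ξ) (hW : Measurable W) :
    ∃ X : Ω → PathSpace d T, Measurable X ∧ ∀ ω, picardMap hT b ℙ ξ W X ω = X ω := by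
  have hK : 0 ≤ K := (norm_nonneg _).trans (hbK 0)
  obtain ⟨Xs, hXs_zero, hXs_succ⟩ : ∃ Xs : ℕ → Ω → PathSpace d T,
      Xs 0 = picardMap hT b ℙ ξ W 0 ∧ ∀ n, Xs (n + 1) = picardMap hT b ℙ ξ W (Xs n) :=
    ⟨fun n => (picardMap hT b ℙ ξ W)^[n] (picardMap hT b ℙ ξ W 0), rfl,
      fun n => Function.iterate_succ_apply' _ _ _⟩
  have hXs_meas (n : ℕ) : Measurable (Xs n) := by
    induction n with
    | zero => exact hXs_zero ▸ measurable_picardMap hT hbK hb hξ hW measurable_const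
    | succ n ih => exact hXs_succ n ▸ measurable_picardMap hT hbK hb hξ hW ih
  have hgap (n : ℕ) : ∀ ω (s : Icc 0 T),
      dist (Xs (n + 1) ω s) (Xs n ω s) ≤ picardBound (2 * K * T) (2 * Λ) n s := by
    induction n with
    | zero =>
      intro ω s
      rw [picardBound_zero, hXs_succ, hXs_zero]
      exact (ContinuousMap.dist_apply_le_dist s).trans
        (dist_picardMap_le hT hbK hb.continuous
          (measurable_picardMap hT hbK hb hξ hW measurable_const) measurable_const ξ W ω)
    | succ n ih =>
      intro ω s
      have h := dist_picardMap_apply_le_picardBound (ℙ := ℙ) hT hbK hb (hXs_meas (n + 1))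
        (hXs_meas n) ξ W (.of_forall ih) (ih ω) s
      rwa [← hXs_succ n, ← hXs_succ (n + 1)] at h
  obtain ⟨X, hlim, htail⟩ := exists_tendsto_of_dist_succ_le (f := Xs) (summable_picardBound _ _ T)
    fun n ω => by
      rw [dist_comm]
      exact dist_le_picardBound_of_forall hT (by positivity) (by positivity) (hgap n ω)
  have hX : Measurable X := measurable_of_tendsto_metrizable hXs_meas (tendsto_pi_nhds.2 hlim)
  refine ⟨X, hX, fun ω => tendsto_nhds_unique (tendsto_picardMap_apply hT hbK hb hXs_meas hX ξ W
    htail (by simpa only [add_comm] using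
      tendsto_sum_nat_add fun n => picardBound (2 * K * T) (2 * Λ) n T) ω) ?_⟩
  simpa only [← hXs_succ, Function.comp_def] using (hlim ω).comp (tendsto_add_atTop_nat 1)

end FixedPoints
end McKeanVlasov

open McKeanVlasov

theorem stmt2_general (d : ℕ) (T : ℝ) (hT : 0 ≤ T)
    (btilde : Euc d × Euc d → Euc d) (K L : ℝ)
    (hbdd : ∀ p, ‖btilde p‖ ≤ K)
    (hlip : ∀ p q, ‖btilde p - btilde q‖ ≤ L * dist p q)
    {Ω : Type} [MeasurableSpace Ω] (ℙ : Measure Ω) [IsProbabilityMeasure ℙ]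
    (W : Ω → PathSpace d T) (hW : Measurable W) (ξ : Ω → Euc d) (hξ : Measurable ξ) :
    ∃ X : Ω → PathSpace d T, Measurable X ∧
      SolvesSznitmanEq hT btilde ℙ ξ W (ℙ.map X) X ∧
      ∀ X' : Ω → PathSpace d T, Measurable X' →
        SolvesSznitmanEq hT btilde ℙ ξ W (ℙ.map X') X' →
          ℙ.map X' = ℙ.map X ∧ ∀ᵐ ω ∂ℙ, X' ω = X ω := by
  have hb : LipschitzWith L.toNNReal btilde :=
    .of_dist_le' fun p q => by simpa only [dist_eq_norm] using hlip p q
  obtain ⟨X, hX, hfix⟩ := exists_measurable_picardMap_eq hT hbdd hb (ℙ := ℙ) hξ hW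
  refine ⟨X, hX, (solvesSznitmanEq_map_iff hT hbdd hb.continuous hX ξ W).2 (.of_forall hfix),
    fun X' hX' hsol => ?_⟩
  have hX'X : X' =ᵐ[ℙ] X := ae_eq_of_picardMap_ae_eq hT hbdd hb hX' hX ξ W
    ((solvesSznitmanEq_map_iff hT hbdd hb.continuous hX' ξ W).1 hsol) (.of_forall hfix)
  exact ⟨Measure.map_congr hX'X, hX'X⟩

/-- **Sznitman's Theorem 1.1**: existence and uniqueness of a strong solution to the
McKean--Vlasov SDE `dX_t = (∫ b̃(X_t,y) 𝓛_{X_t}(dy)) dt + dW_t`, `X_0 = ξ`, where the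
drift depends on the law of the solution itself. -/
theorem stmt2 (d : ℕ) (hd : 1 ≤ d) (T : ℝ) (hT : 0 ≤ T)
    (btilde : Euc d × Euc d → Euc d) (K L : ℝ)
    (hbdd : ∀ p, ‖btilde p‖ ≤ K)
    (hlip : ∀ p q, ‖btilde p - btilde q‖ ≤ L * dist p q)
    {Ω : Type} [MeasurableSpace Ω] (ℙ : Measure Ω) [IsProbabilityMeasure ℙ]
    (W : Ω → PathSpace d T) (hW : Measurable W) (ξ : Ω → Euc d) (hξ : Measurable ξ) :
    ∃ X : Ω → PathSpace d T, Measurable X ∧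
      SolvesSznitmanEq hT btilde ℙ ξ W (ℙ.map X) X ∧
      ∀ X' : Ω → PathSpace d T, Measurable X' →
        SolvesSznitmanEq hT btilde ℙ ξ W (ℙ.map X') X' →
          ℙ.map X' = ℙ.map X ∧ ∀ᵐ ω ∂ℙ, X' ω = X ω :=
  stmt2_general d T hT btilde K L hbdd hlip ℙ W hW ξ hξ

end
end

section
/- Let d ≥ 1 and θ ∈ (0, 1/2). Then there exists a constant c > 0, depending only on d and θ, such that for every bounded measurable f : ℝ^d → ℝ with [f]_{2θ} < ∞ and every t > 0, ‖P_t f − f‖_∞ ≤ c t^{θ} [f]_{2θ}. -/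
/-!
Since `g_t` is a probability density, `P_t f x - f x = ∫ g_t (x - y) (f y - f x) dy`, so the
Hölder bound gives `|P_t f x - f x| ≤ [f]_{2θ} ∫ g_t(z) |z|^{2θ} dz`. The substitution
`z = √t w` turns this moment of `g_t` into `t^θ` times the same moment of `g_1`, which is
finite because `|w|^{2θ}` is dominated by a multiple of `exp(|w|²/4)`.
-/

open MeasureTheory

noncomputable section

/-- The Gaussian heat kernel `g_t(x) = (2πt)^{-d/2} exp(-|x|²/(2t))` on `ℝ^d`. -/
def heatKernel (d : ℕ) (t : ℝ) (x : EuclideanSpace ℝ (Fin d)) : ℝ :=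
  (2 * Real.pi * t) ^ (-(d : ℝ) / 2) * Real.exp (-‖x‖ ^ 2 / (2 * t))

/-- The heat semigroup `P_t f = g_t * f`. -/
def heatSemigroup (d : ℕ) (t : ℝ) (f : EuclideanSpace ℝ (Fin d) → ℝ)
    (x : EuclideanSpace ℝ (Fin d)) : ℝ :=
  ∫ y, heatKernel d t (x - y) * f y

open Real

section ApproximateIdentity

variable {E : Type*} [NormedAddCommGroup E] [MeasurableSpace E] [MeasurableAdd E] [MeasurableNeg E]
  {μ : Measure E} [μ.IsNegInvariant] [μ.IsAddLeftInvariant]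

theorem abs_integral_kernel_mul_sub_le {k f : E → ℝ} {α C : ℝ} (hk₀ : ∀ z, 0 ≤ k z)
    (hk₁ : ∫ z, k z ∂μ = 1) (hk : Integrable k μ) (hkα : Integrable (fun z ↦ k z * ‖z‖ ^ α) μ)
    (hf : AEStronglyMeasurable f μ) (hfC : ∀ x y, |f x - f y| ≤ C * ‖x - y‖ ^ α) (x : E) :
    |∫ y, k (x - y) * f y ∂μ - f x| ≤ C * ∫ z, k z * ‖z‖ ^ α ∂μ := by
  have hkx : Integrable (fun y ↦ k (x - y)) μ := hk.comp_sub_left x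
  have hbound : ∀ y, ‖k (x - y) * (f y - f x)‖ ≤ C * (k (x - y) * ‖x - y‖ ^ α) := fun y ↦ by
    rw [Real.norm_eq_abs, abs_mul, abs_of_nonneg (hk₀ _), abs_sub_comm, mul_left_comm]
    exact mul_le_mul_of_nonneg_left (hfC x y) (hk₀ _)
  have hdiff : Integrable (fun y ↦ k (x - y) * (f y - f x)) μ :=
    ((hkα.comp_sub_left x).const_mul C).mono'
      (hkx.aestronglyMeasurable.mul (hf.sub aestronglyMeasurable_const)) (ae_of_all _ hbound)
  have hsplit : ∫ y, k (x - y) * f y ∂μ = ∫ y, k (x - y) * (f y - f x) ∂μ + f x := by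
    calc ∫ y, k (x - y) * f y ∂μ = ∫ y, (k (x - y) * (f y - f x) + k (x - y) * f x) ∂μ := by
          simp only [mul_sub, sub_add_cancel]
      _ = ∫ y, k (x - y) * (f y - f x) ∂μ + f x := by
          rw [integral_add hdiff (hkx.mul_const _), integral_mul_const,
            integral_sub_left_eq_self k μ x, hk₁, one_mul]
  rw [hsplit, add_sub_cancel_right, ← Real.norm_eq_abs]
  calc ‖∫ y, k (x - y) * (f y - f x) ∂μ‖ ≤ ∫ y, C * (k (x - y) * ‖x - y‖ ^ α) ∂μ :=
        norm_integral_le_of_norm_le ((hkα.comp_sub_left x).const_mul C) (ae_of_all _ hbound)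
    _ = C * ∫ z, k z * ‖z‖ ^ α ∂μ := by
        rw [integral_const_mul, integral_sub_left_eq_self (fun z ↦ k z * ‖z‖ ^ α) μ x]

end ApproximateIdentity

section GaussianMoments

variable {V : Type*} [NormedAddCommGroup V] [InnerProductSpace ℝ V] [FiniteDimensional ℝ V]
  [MeasurableSpace V] [BorelSpace V]

theorem integrable_exp_neg_mul_sq_norm {b : ℝ} (hb : 0 < b) :
    Integrable (fun v : V ↦ exp (-b * ‖v‖ ^ 2)) :=
  .of_integral_ne_zero (by rw [GaussianFourier.integral_rexp_neg_mul_sq_norm hb]; positivity)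

theorem rpow_le_one_add_sq {r p : ℝ} (hr : 0 ≤ r) (hp₀ : 0 ≤ p) (hp₂ : p ≤ 2) :
    r ^ p ≤ 1 + r ^ 2 := by
  rcases le_total r 1 with h | h
  · linarith [rpow_le_one hr h hp₀, sq_nonneg r]
  · have := rpow_le_rpow_of_exponent_le h hp₂
    rw [rpow_two] at this
    linarith

theorem one_add_sq_le_mul_exp {b : ℝ} (hb : 0 < b) (r : ℝ) :
    1 + r ^ 2 ≤ (1 + 2 / b) * exp (b / 2 * r ^ 2) := by
  have h₁ : 1 ≤ exp (b / 2 * r ^ 2) := one_le_exp (by positivity)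
  have h₂ : r ^ 2 ≤ 2 / b * exp (b / 2 * r ^ 2) := by
    calc r ^ 2 = 2 / b * (b / 2 * r ^ 2) := by field_simp
      _ ≤ 2 / b * exp (b / 2 * r ^ 2) := by
          gcongr; linarith [add_one_le_exp (b / 2 * r ^ 2)]
  linarith

theorem integrable_exp_neg_mul_sq_norm_mul_rpow {b p : ℝ} (hb : 0 < b) (hp₀ : 0 ≤ p)
    (hp₂ : p ≤ 2) : Integrable (fun v : V ↦ exp (-b * ‖v‖ ^ 2) * ‖v‖ ^ p) := by
  refine ((integrable_exp_neg_mul_sq_norm (half_pos hb)).const_mul (1 + 2 / b)).mono'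
    (by fun_prop) (ae_of_all _ fun v ↦ ?_)
  rw [Real.norm_of_nonneg (by positivity)]
  calc exp (-b * ‖v‖ ^ 2) * ‖v‖ ^ p
      ≤ exp (-b * ‖v‖ ^ 2) * ((1 + 2 / b) * exp (b / 2 * ‖v‖ ^ 2)) := by
        gcongr
        exact (rpow_le_one_add_sq (norm_nonneg v) hp₀ hp₂).trans (one_add_sq_le_mul_exp hb _)
    _ = (1 + 2 / b) * exp (-(b / 2) * ‖v‖ ^ 2) := by
        rw [mul_left_comm, ← exp_add]; ring_nf

end GaussianMoments

section HeatKernel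

variable {d : ℕ} {t : ℝ}

theorem heatKernel_eq_mul_exp (x : EuclideanSpace ℝ (Fin d)) :
    heatKernel d t x = (2 * π * t) ^ (-(d : ℝ) / 2) * exp (-(2 * t)⁻¹ * ‖x‖ ^ 2) := by
  rw [heatKernel]; ring_nf

theorem heatKernel_nonneg (ht : 0 ≤ t) (x : EuclideanSpace ℝ (Fin d)) : 0 ≤ heatKernel d t x := by
  rw [heatKernel]; positivity

theorem integrable_heatKernel (ht : 0 < t) : Integrable (heatKernel d t) := by
  simp only [funext heatKernel_eq_mul_exp]
  exact (integrable_exp_neg_mul_sq_norm (by positivity)).const_mul _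

theorem integral_heatKernel (ht : 0 < t) : ∫ x, heatKernel d t x = 1 := by
  simp only [heatKernel_eq_mul_exp]
  rw [integral_const_mul, GaussianFourier.integral_rexp_neg_mul_sq_norm (by positivity),
    finrank_euclideanSpace_fin, div_inv_eq_mul, show π * (2 * t) = 2 * π * t by ring,
    ← rpow_add (by positivity), neg_div, neg_add_cancel, rpow_zero]

theorem integrable_heatKernel_mul_norm_rpow (ht : 0 < t) {p : ℝ} (hp₀ : 0 ≤ p) (hp₂ : p ≤ 2) :
    Integrable (fun x : EuclideanSpace ℝ (Fin d) ↦ heatKernel d t x * ‖x‖ ^ p) := by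
  simp only [heatKernel_eq_mul_exp, mul_assoc]
  exact (integrable_exp_neg_mul_sq_norm_mul_rpow (by positivity) hp₀ hp₂).const_mul _

theorem heatKernel_sqrt_smul (ht : 0 < t) (w : EuclideanSpace ℝ (Fin d)) :
    heatKernel d t (√t • w) = t ^ (-(d : ℝ) / 2) * heatKernel d 1 w := by
  have hnorm : ‖√t • w‖ ^ 2 = t * ‖w‖ ^ 2 := by
    rw [norm_smul, Real.norm_of_nonneg (sqrt_nonneg t), mul_pow, sq_sqrt ht.le]
  rw [heatKernel, heatKernel, hnorm, mul_one, mul_rpow (by positivity) ht.le]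
  field_simp

theorem integral_heatKernel_mul_norm_rpow (ht : 0 < t) (p : ℝ) :
    ∫ x, heatKernel d t x * ‖x‖ ^ p = t ^ (p / 2) * ∫ w, heatKernel d 1 w * ‖w‖ ^ p := by
  have hsub := Measure.integral_comp_smul_of_nonneg volume
    (fun x : EuclideanSpace ℝ (Fin d) ↦ heatKernel d t x * ‖x‖ ^ p) √t (hR := sqrt_nonneg t)
  have hpoint : ∀ w : EuclideanSpace ℝ (Fin d), heatKernel d t (√t • w) * ‖√t • w‖ ^ p
      = t ^ (-(d : ℝ) / 2) * (t ^ (p / 2) * (heatKernel d 1 w * ‖w‖ ^ p)) := fun w ↦ by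
    rw [heatKernel_sqrt_smul ht, norm_smul, Real.norm_of_nonneg (sqrt_nonneg t),
      mul_rpow (sqrt_nonneg t) (norm_nonneg w), sqrt_eq_rpow, ← rpow_mul ht.le]
    ring_nf
  have hvol : (√t ^ d)⁻¹ = t ^ (-(d : ℝ) / 2) := by
    rw [sqrt_eq_rpow, ← rpow_natCast, ← rpow_mul ht.le, ← rpow_neg ht.le]
    ring_nf
  simp only [hpoint, integral_const_mul, finrank_euclideanSpace_fin, hvol, smul_eq_mul] at hsub
  exact (mul_left_cancel₀ (by positivity) hsub).symm

end HeatKernel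

theorem stmt13_general (d : ℕ) (θ : ℝ) (hθ : θ ∈ Set.Ioo (0:ℝ) (1/2)) :
    ∃ c : ℝ, 0 < c ∧ ∀ f : EuclideanSpace ℝ (Fin d) → ℝ, Measurable f →
      (∃ M, ∀ x, |f x| ≤ M) →
      ∀ Cf : ℝ, 0 ≤ Cf → (∀ x y, |f x - f y| ≤ Cf * ‖x - y‖ ^ (2 * θ)) →
      ∀ t : ℝ, 0 < t → ∀ x,
        |heatSemigroup d t f x - f x| ≤ c * t ^ θ * Cf := by
  obtain ⟨hθ₀, hθ₁⟩ := hθ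
  set m := ∫ w, heatKernel d 1 w * ‖w‖ ^ (2 * θ)
  have hm : 0 ≤ m :=
    integral_nonneg fun w ↦ mul_nonneg (heatKernel_nonneg zero_le_one w) (by positivity)
  refine ⟨m + 1, by linarith, fun f hf _ Cf hCf hfC t ht x ↦ ?_⟩
  calc |heatSemigroup d t f x - f x| ≤ Cf * ∫ z, heatKernel d t z * ‖z‖ ^ (2 * θ) :=
        abs_integral_kernel_mul_sub_le (heatKernel_nonneg ht.le) (integral_heatKernel ht)
          (integrable_heatKernel ht)
          (integrable_heatKernel_mul_norm_rpow ht (by linarith) (by linarith))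
          hf.aestronglyMeasurable hfC x
    _ = m * t ^ θ * Cf := by
        rw [integral_heatKernel_mul_norm_rpow ht, mul_div_cancel_left₀ θ two_ne_zero]; ring
    _ ≤ (m + 1) * t ^ θ * Cf := by gcongr; linarith

/-- **Schauder estimate** `‖P_t f − f‖_∞ ≤ c t^θ [f]_{2θ}` (Lemma 5.3(2) of the paper, in
classical Hölder spaces): rate of convergence of the heat semigroup to the identity on
Hölder functions. -/
theorem stmt13 (d : ℕ) (hd : 1 ≤ d) (θ : ℝ) (hθ : θ ∈ Set.Ioo (0:ℝ) (1/2)) :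
    ∃ c : ℝ, 0 < c ∧ ∀ f : EuclideanSpace ℝ (Fin d) → ℝ, Measurable f →
      (∃ M, ∀ x, |f x| ≤ M) →
      ∀ Cf : ℝ, 0 ≤ Cf → (∀ x y, |f x - f y| ≤ Cf * ‖x - y‖ ^ (2 * θ)) →
      ∀ t : ℝ, 0 < t → ∀ x,
        |heatSemigroup d t f x - f x| ≤ c * t ^ θ * Cf :=
  stmt13_general d θ hθ

end
end

section
/- Let α ∈ (0,1), d ≥ 1, and let F : ℝ → ℝ be bounded and differentiable with F' bounded and Lipschitz continuous. Then there exists a constant c > 0, depending only on sup|F'| and the Lipschitz constant of F', such that for all bounded functions f, g : ℝ^d → ℝ with [f]_α < ∞ and [g]_α < ∞: ‖F∘f − F∘g‖_∞ + [F∘f − F∘g]_α ≤ c (1 + [f]_α + [g]_α) ( ‖f − g‖_∞ + [f − g]_α ). -/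
noncomputable section

/-- Key pointwise estimate: for `F` differentiable with bounded Lipschitz derivative,
`|(F p − F q) − (F p' − F q')| ≤ M'|(p−q)−(p'−q')| + L' max(|p−p'|,|q−q'|) |p'−q'|`. -/
lemma stmt15_key (F : ℝ → ℝ) (MF' LF' : ℝ) (hFdiff : Differentiable ℝ F)
    (hF'bdd : ∀ x, |deriv F x| ≤ MF')
    (hF'lip : ∀ x y, |deriv F x - deriv F y| ≤ LF' * |x - y|)
    (hL : 0 ≤ LF') (p q p' q' : ℝ) :
    |(F p - F q) - (F p' - F q')| ≤
      MF' * |(p - q) - (p' - q')| + LF' * max |p - p'| |q - q'| * |p' - q'| := by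
  set C : ℝ := MF' * |(p - q) - (p' - q')| + LF' * max |p - p'| |q - q'| * |p' - q'| with hC
  set φ : ℝ → ℝ := fun t => F (q + t * (p - q)) - F (q' + t * (p' - q')) with hφ
  set φ' : ℝ → ℝ := fun t =>
    deriv F (q + t * (p - q)) * (p - q) - deriv F (q' + t * (p' - q')) * (p' - q') with hφ'
  have hder : ∀ t ∈ Set.Icc (0:ℝ) 1, HasDerivWithinAt φ (φ' t) (Set.Icc 0 1) t := by
    intro t _
    have h1 : HasDerivAt (fun t : ℝ => q + t * (p - q)) (p - q) t := by
      simpa using ((hasDerivAt_id t).mul_const (p - q)).const_add q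
    have h2 : HasDerivAt (fun t : ℝ => q' + t * (p' - q')) (p' - q') t := by
      simpa using ((hasDerivAt_id t).mul_const (p' - q')).const_add q'
    have hc1 : HasDerivAt (fun t : ℝ => F (q + t * (p - q)))
        (deriv F (q + t * (p - q)) * (p - q)) t :=
      (hFdiff _).hasDerivAt.comp t h1
    have hc2 : HasDerivAt (fun t : ℝ => F (q' + t * (p' - q')))
        (deriv F (q' + t * (p' - q')) * (p' - q')) t :=
      (hFdiff _).hasDerivAt.comp t h2
    exact (hc1.sub hc2).hasDerivWithinAt
  have hbound : ∀ t ∈ Set.Icc (0:ℝ) 1, ‖φ' t‖ ≤ C := by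
    intro t ht
    set A : ℝ := q + t * (p - q)
    set B : ℝ := q' + t * (p' - q')
    have hAB : A - B = (1 - t) * (q - q') + t * (p - p') := by ring
    have hABle : |A - B| ≤ max |p - p'| |q - q'| := by
      rw [hAB]
      calc |(1 - t) * (q - q') + t * (p - p')|
          ≤ |(1 - t) * (q - q')| + |t * (p - p')| := abs_add_le _ _
        _ = (1 - t) * |q - q'| + t * |p - p'| := by
            rw [abs_mul, abs_mul, abs_of_nonneg (by linarith [ht.2] : (0:ℝ) ≤ 1 - t),
              abs_of_nonneg ht.1]
        _ ≤ (1 - t) * max |p - p'| |q - q'| + t * max |p - p'| |q - q'| := by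
            have h1 : |q - q'| ≤ max |p - p'| |q - q'| := le_max_right _ _
            have h2 : |p - p'| ≤ max |p - p'| |q - q'| := le_max_left _ _
            have : (0:ℝ) ≤ 1 - t := by linarith [ht.2]
            nlinarith [ht.1]
        _ = max |p - p'| |q - q'| := by ring
    have heq : φ' t = deriv F A * ((p - q) - (p' - q')) + (deriv F A - deriv F B) * (p' - q') := by
      simp only [hφ']
      ring
    rw [Real.norm_eq_abs, heq]
    calc |deriv F A * ((p - q) - (p' - q')) + (deriv F A - deriv F B) * (p' - q')|
        ≤ |deriv F A * ((p - q) - (p' - q'))| + |(deriv F A - deriv F B) * (p' - q')| :=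
          abs_add_le _ _
      _ = |deriv F A| * |(p - q) - (p' - q')| + |deriv F A - deriv F B| * |p' - q'| := by
          rw [abs_mul, abs_mul]
      _ ≤ MF' * |(p - q) - (p' - q')| + (LF' * max |p - p'| |q - q'|) * |p' - q'| := by
          have h1 : |deriv F A| * |(p - q) - (p' - q')| ≤ MF' * |(p - q) - (p' - q')| :=
            mul_le_mul_of_nonneg_right (hF'bdd A) (abs_nonneg _)
          have h2 : |deriv F A - deriv F B| ≤ LF' * max |p - p'| |q - q'| :=
            le_trans (hF'lip A B) (mul_le_mul_of_nonneg_left hABle hL)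
          have h3 : |deriv F A - deriv F B| * |p' - q'| ≤
              (LF' * max |p - p'| |q - q'|) * |p' - q'| :=
            mul_le_mul_of_nonneg_right h2 (abs_nonneg _)
          linarith
      _ = C := by rw [hC]
  have hmain := (convex_Icc (0:ℝ) 1).norm_image_sub_le_of_norm_hasDerivWithin_le
    hder hbound (Set.left_mem_Icc.2 zero_le_one) (Set.right_mem_Icc.2 zero_le_one)
  have e1 : q + 1 * (p - q) = p := by ring
  have e2 : q' + 1 * (p' - q') = p' := by ring
  have e3 : q + 0 * (p - q) = q := by ring
  have e4 : q' + 0 * (p' - q') = q' := by ring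
  have hφval : φ 1 - φ 0 = (F p - F q) - (F p' - F q') := by
    simp only [hφ, e1, e2, e3, e4]
    ring
  rw [hφval, Real.norm_eq_abs] at hmain
  have : ‖(1:ℝ) - 0‖ = 1 := by norm_num
  rw [this, mul_one] at hmain
  exact hmain

/-- **Local Lipschitz property of the composition operator `f ↦ F∘f` on Hölder spaces**
(Proposition 3.1 of Issoglio): for `F` bounded and `C¹` with bounded Lipschitz derivative,
`‖F∘f − F∘g‖_∞ + [F∘f − F∘g]_α ≤ c (1 + [f]_α + [g]_α)(‖f−g‖_∞ + [f−g]_α)`.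
The Hölder seminorms are encoded through arbitrary upper bounds `Cf, Cg, Mfg, Kfg`, and
the sum `‖·‖_∞ + [·]_α` of the left-hand side through the pointwise quantity
`|u(x)| + |u(a) − u(b)|/‖a−b‖^α`. -/
theorem stmt15 (α : ℝ) (hα : α ∈ Set.Ioo (0:ℝ) 1) (d : ℕ) (hd : 1 ≤ d)
    (F : ℝ → ℝ) (MF MF' LF' : ℝ)
    (hFbdd : ∀ x, |F x| ≤ MF) (hFdiff : Differentiable ℝ F)
    (hF'bdd : ∀ x, |deriv F x| ≤ MF')
    (hF'lip : ∀ x y, |deriv F x - deriv F y| ≤ LF' * |x - y|) :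
    ∃ c : ℝ, 0 < c ∧
      ∀ f g : EuclideanSpace ℝ (Fin d) → ℝ,
        (∃ M, ∀ x, |f x| ≤ M) → (∃ M, ∀ x, |g x| ≤ M) →
        ∀ Cf : ℝ, 0 ≤ Cf → (∀ x y, |f x - f y| ≤ Cf * ‖x - y‖ ^ α) →
        ∀ Cg : ℝ, 0 ≤ Cg → (∀ x y, |g x - g y| ≤ Cg * ‖x - y‖ ^ α) →
        ∀ Mfg : ℝ, 0 ≤ Mfg → (∀ x, |f x - g x| ≤ Mfg) →
        ∀ Kfg : ℝ, 0 ≤ Kfg → (∀ x y, |(f x - g x) - (f y - g y)| ≤ Kfg * ‖x - y‖ ^ α) →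
        ∀ x a b : EuclideanSpace ℝ (Fin d), a ≠ b →
          |F (f x) - F (g x)|
            + |(F (f a) - F (g a)) - (F (f b) - F (g b))| / ‖a - b‖ ^ α
          ≤ c * (1 + Cf + Cg) * (Mfg + Kfg) := by
  have hM' : 0 ≤ MF' := le_trans (abs_nonneg _) (hF'bdd 0)
  have hL' : 0 ≤ LF' := by
    have := hF'lip 0 1
    have h0 : (0:ℝ) ≤ |deriv F 0 - deriv F 1| := abs_nonneg _
    simp only [zero_sub, abs_neg, abs_one, mul_one] at this
    linarith
  refine ⟨MF' + LF' + 1, by linarith, ?_⟩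
  intro f g _ _ Cf hCf hf Cg hCg hg Mfg hMfg hfg Kfg hKfg hK x a b hab
  set P : ℝ := ‖a - b‖ ^ α with hP
  have hPpos : 0 < P := by
    apply Real.rpow_pos_of_pos
    rw [norm_pos_iff]
    exact sub_ne_zero.2 hab
  -- sup-norm part
  have h1 : |F (f x) - F (g x)| ≤ MF' * Mfg := by
    have hk := stmt15_key F MF' LF' hFdiff hF'bdd hF'lip hL' (f x) (g x) 0 0
    simp only [sub_self, sub_zero, abs_zero, mul_zero, add_zero] at hk
    calc |F (f x) - F (g x)| ≤ MF' * |f x - g x| := hk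
      _ ≤ MF' * Mfg := mul_le_mul_of_nonneg_left (hfg x) hM'
  -- Hölder part
  have h2 : |(F (f a) - F (g a)) - (F (f b) - F (g b))| ≤
      (MF' * Kfg + LF' * Mfg * Cg) * P := by
    have hk := stmt15_key F MF' LF' hFdiff hF'bdd hF'lip hL' (f a) (f b) (g a) (g b)
    have hre : |(F (f a) - F (g a)) - (F (f b) - F (g b))| =
        |(F (f a) - F (f b)) - (F (g a) - F (g b))| := by ring_nf
    rw [hre]
    have hb1 : |(f a - f b) - (g a - g b)| ≤ Kfg * P := by
      have := hK a b
      have hre2 : |(f a - f b) - (g a - g b)| = |(f a - g a) - (f b - g b)| := by ring_nf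
      rw [hre2]; exact this
    have hb2 : max |f a - g a| |f b - g b| ≤ Mfg := max_le (hfg a) (hfg b)
    have hb3 : |g a - g b| ≤ Cg * P := hg a b
    calc |(F (f a) - F (f b)) - (F (g a) - F (g b))|
        ≤ MF' * |(f a - f b) - (g a - g b)| +
          LF' * max |f a - g a| |f b - g b| * |g a - g b| := hk
      _ ≤ MF' * (Kfg * P) + LF' * Mfg * (Cg * P) := by
          have t1 : MF' * |(f a - f b) - (g a - g b)| ≤ MF' * (Kfg * P) :=
            mul_le_mul_of_nonneg_left hb1 hM'
          have t2 : LF' * max |f a - g a| |f b - g b| * |g a - g b| ≤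
              LF' * Mfg * (Cg * P) := by
            apply mul_le_mul (mul_le_mul_of_nonneg_left hb2 hL') hb3 (abs_nonneg _)
            positivity
          linarith
      _ = (MF' * Kfg + LF' * Mfg * Cg) * P := by ring
  have h2' : |(F (f a) - F (g a)) - (F (f b) - F (g b))| / P ≤
      MF' * Kfg + LF' * Mfg * Cg := by
    rw [div_le_iff₀ hPpos]
    exact h2
  have hfinal : MF' * Mfg + (MF' * Kfg + LF' * Mfg * Cg) ≤
      (MF' + LF' + 1) * (1 + Cf + Cg) * (Mfg + Kfg) := by
    nlinarith [mul_nonneg hM' hMfg, mul_nonneg hL' hMfg, mul_nonneg hCf hMfg,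
      mul_nonneg hCg hKfg, mul_nonneg hM' hKfg, mul_nonneg hCf hKfg,
      mul_nonneg (mul_nonneg hL' hMfg) hCg, mul_nonneg hCg hMfg,
      mul_nonneg (mul_nonneg hL' hKfg) hCg]
  linarith

end
end
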